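/- Let a > 0 be a real constant and let g : ℝ → ℝ be given by an everywhere-convergent power series, g(x) = Σ_{i=0}^{∞} cᵢ xⁱ for all x ∈ ℝ (so that cᵢ = g⁽ⁱ⁾(0)/i! = G(i)). Define f(t) = g(t − a). Then for every k ∈ ℕ the series Σ_{i=k}^{∞} (−1)^{i−k} · C(i,k) · a^{i−k} · G(i) converges and equals the differential transformation F(k) of f at 0, i.e. f⁽ᵏ⁾(0)/k! = Σ_{i=k}^{∞} (−1)^{i−k} · C(i,k) · a^{i−k} · cᵢ, where C(i,k) denotes the binomial coefficient. -/

import Mathlib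

/-!
An everywhere-convergent power series may be differentiated termwise, so by induction on `k`,
`g⁽ᵏ⁾(x) / k! = ∑ⱼ C(k+j, k) c_{k+j} xʲ` for every `x`. Since `f⁽ᵏ⁾(0) = g⁽ᵏ⁾(-a)`, evaluating
at `x = -a` gives the claim.
-/

open FormalMultilinearSeries
open scoped Nat

variable {𝕜 : Type*} [RCLike 𝕜]

theorem FormalMultilinearSeries.ofScalars_radius_eq_top_of_forall_summable {d : ℕ → 𝕜}
    (hd : ∀ x : 𝕜, Summable fun i ↦ d i * x ^ i) : (ofScalars 𝕜 d).radius = ⊤ := by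
  refine ENNReal.eq_top_of_forall_nnreal_le fun r ↦ (ofScalars 𝕜 d).le_radius_of_isBigO ?_
  refine (((hd ((r : ℝ) : 𝕜)).tendsto_atTop_zero.isBigO_one ℝ).norm_left).congr_left fun n ↦ ?_
  simp

theorem FormalMultilinearSeries.derivSeries_ofScalars_apply_one (d : ℕ → 𝕜) (n : ℕ) (x : 𝕜) :
    (ofScalars 𝕜 d).derivSeries n (fun _ ↦ x) 1 = (n + 1) * d (n + 1) * x ^ n := by
  have hdiag := (ofScalars 𝕜 d).derivSeries_apply_diag n 1
  have hhom := ((ofScalars 𝕜 d).derivSeries n).map_smul_univ (fun _ ↦ x) (fun _ ↦ 1)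
  simp only [smul_eq_mul, mul_one, Finset.prod_const, Finset.card_univ, Fintype.card_fin] at hhom
  rw [hhom, _root_.smul_apply, hdiag, ofScalars_apply_eq]
  simp
  ring

theorem hasFPowerSeriesOnBall_ofScalars_of_forall_hasSum {d : ℕ → 𝕜} {f : 𝕜 → 𝕜}
    (hf : ∀ x, HasSum (fun i ↦ d i * x ^ i) (f x)) :
    HasFPowerSeriesOnBall f (ofScalars 𝕜 d) 0 ⊤ where
  r_le := (ofScalars_radius_eq_top_of_forall_summable fun x ↦ (hf x).summable).ge
  r_pos := ENNReal.zero_lt_top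
  hasSum {y} _ := by simpa [ofScalars_apply_eq, mul_comm] using hf y

theorem hasSum_deriv_of_forall_hasSum {d : ℕ → 𝕜} {f : 𝕜 → 𝕜}
    (hf : ∀ x, HasSum (fun i ↦ d i * x ^ i) (f x)) (x : 𝕜) :
    HasSum (fun j ↦ (j + 1) * d (j + 1) * x ^ j) (deriv f x) := by
  have hfderiv := (hasFPowerSeriesOnBall_ofScalars_of_forall_hasSum hf).fderiv.hasSum
    (y := x) (by simp)
  simpa [derivSeries_ofScalars_apply_one, mul_comm] using
    (ContinuousLinearMap.apply 𝕜 𝕜 (1 : 𝕜)).hasSum hfderiv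

theorem hasSum_iteratedDeriv_div_factorial_of_forall_hasSum {d : ℕ → 𝕜} {f : 𝕜 → 𝕜}
    (hf : ∀ x, HasSum (fun i ↦ d i * x ^ i) (f x)) (k : ℕ) (x : 𝕜) :
    HasSum (fun j ↦ (k + j).choose k * d (k + j) * x ^ j) (iteratedDeriv k f x / k !) := by
  induction k generalizing x with
  | zero => simpa using hf x
  | succ k ih =>
    have hderiv := (hasSum_deriv_of_forall_hasSum ih x).div_const (k + 1)
    convert hderiv using 1
    · ext j
      have hchoose : (k + j + 1).choose (k + 1) * (k + 1) = (k + j + 1).choose k * (j + 1) := by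
        rw [Nat.choose_succ_right_eq, add_assoc, Nat.add_sub_cancel_left]
      have hchoose' : ((k + j + 1).choose (k + 1) * (k + 1) : 𝕜)
          = (k + j + 1).choose k * (j + 1) := by
        exact_mod_cast hchoose
      rw [show k + 1 + j = k + j + 1 by omega, ← add_assoc]
      field_simp
      linear_combination d (k + j + 1) * x ^ j * hchoose'
    · rw [deriv_div_const, ← iteratedDeriv_succ, Nat.factorial_succ, Nat.cast_mul, div_div,
        Nat.cast_succ, mul_comm]

theorem stmt_3_general (a : ℝ) (c : ℕ → ℝ) (g : ℝ → ℝ)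
    (hg : ∀ x : ℝ, HasSum (fun i : ℕ => c i * x ^ i) (g x)) (k : ℕ) :
    HasSum
      (fun j : ℕ => (-1 : ℝ) ^ j * (Nat.choose (k + j) k : ℝ) * a ^ j * c (k + j))
      (iteratedDeriv k (fun t => g (t - a)) 0 / (Nat.factorial k : ℝ)) := by
  simp only [iteratedDeriv_comp_sub_const, zero_sub]
  refine (hasSum_iteratedDeriv_div_factorial_of_forall_hasSum hg k (-a)).congr_fun fun j ↦ ?_
  rw [neg_pow]
  ring

/-- Differential transformation of a shifted function: if `g(x) = Σ_{i=0}^∞ cᵢ xⁱ`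
for all `x ∈ ℝ` and `f(t) = g(t−a)` with `a > 0`, then for every `k` the series
`Σ_{i=k}^∞ (−1)^{i−k} C(i,k) a^{i−k} cᵢ` (written with index `i = k + j`) converges
and its sum is `F(k) = f⁽ᵏ⁾(0)/k!`. -/
theorem stmt_3 (a : ℝ) (ha : 0 < a) (c : ℕ → ℝ) (g : ℝ → ℝ)
    (hg : ∀ x : ℝ, HasSum (fun i : ℕ => c i * x ^ i) (g x)) (k : ℕ) :
    HasSum
      (fun j : ℕ => (-1 : ℝ) ^ j * (Nat.choose (k + j) k : ℝ) * a ^ j * c (k + j))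
      (iteratedDeriv k (fun t => g (t - a)) 0 / (Nat.factorial k : ℝ)) :=
  stmt_3_general a c g hg k
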